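/- A virtually cyclic normal subgroup of a Gromov hyperbolic group is either finite or of finite index. -/

import Mathlib

open scoped Classical

noncomputable section

/-! ## Abstract simplicial complexes and their geometric realizations -/

/-- An abstract simplicial complex on the vertex type `V`: a family of nonempty finite
subsets of `V` (the faces, or simplices), closed under passing to nonempty subsets. -/
structure SComplex (V : Type) : Type where
  faces : Set (Finset V)
  not_empty_mem : ∅ ∉ faces
  down_closed : ∀ ⦃s t : Finset V⦄, s ∈ faces → t ⊆ s → t.Nonempty → t ∈ faces

namespace SComplex

variable {V W : Type}

/-- The geometric realization of an abstract simplicial complex: the set of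
convex-combination functions `V → ℝ` supported on a single face (with the topology
inherited from the product topology on `V → ℝ`). -/
def space (K : SComplex V) : Set (V → ℝ) :=
  {f | (∃ s ∈ K.faces, ∀ v, f v ≠ 0 → v ∈ s) ∧ (∀ v, 0 ≤ f v) ∧ ∑ᶠ v, f v = 1}

/-- `L` is a subcomplex of `K`. -/
def IsSubcomplex (L K : SComplex V) : Prop := L.faces ⊆ K.faces

theorem space_mono {L K : SComplex V} (h : L.IsSubcomplex K) : L.space ⊆ K.space := by
  rintro f ⟨⟨s, hs, hsupp⟩, hpos, hsum⟩
  exact ⟨⟨s, h hs, hsupp⟩, hpos, hsum⟩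

/-- The `n`-skeleton of a simplicial complex: all faces of dimension at most `n`. -/
def skeleton (K : SComplex V) (n : ℕ) : SComplex V where
  faces := {s | s ∈ K.faces ∧ s.card ≤ n + 1}
  not_empty_mem h := K.not_empty_mem h.1
  down_closed := by
    intro s t hs hts ht
    exact ⟨K.down_closed hs.1 hts ht, (Finset.card_le_card hts).trans hs.2⟩

theorem skeleton_isSubcomplex (K : SComplex V) (n : ℕ) : (K.skeleton n).IsSubcomplex K :=
  fun _ hs => hs.1

/-- The vertex set of a simplicial complex. -/
def vertexSet (K : SComplex V) : Set V := {v | ({v} : Finset V) ∈ K.faces}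

/-- A simplicial complex is finite dimensional if the cardinality of faces is bounded. -/
def FiniteDim (K : SComplex V) : Prop := ∃ n : ℕ, ∀ s ∈ K.faces, s.card ≤ n + 1

/-- `K.compl M` is `X − M`: the smallest subcomplex of `K` containing the set-theoretic
complement of (the realization of) the subcomplex `M`; combinatorially it is generated by
the faces of `K` that do not belong to `M`. -/
def compl (K M : SComplex V) : SComplex V where
  faces := {t | t.Nonempty ∧ ∃ s ∈ K.faces, s ∉ M.faces ∧ t ⊆ s}
  not_empty_mem h := Finset.not_nonempty_empty h.1
  down_closed := by
    rintro s t ⟨-, u, hu, huM, hsu⟩ hts ht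
    exact ⟨ht, u, hu, huM, hts.trans hsu⟩

/-- A flag simplicial complex: every finite set of vertices that are pairwise joined by
edges spans a face. -/
def Flag (K : SComplex V) : Prop :=
  ∀ s : Finset V, s.Nonempty → (∀ v ∈ s, ∀ w ∈ s, ({v, w} : Finset V) ∈ K.faces) →
    s ∈ K.faces

/-- The full subcomplex of `K` spanned by the vertex subset `A`. -/
def fullSub (K : SComplex V) (A : Set V) : SComplex V where
  faces := {s | s ∈ K.faces ∧ ↑s ⊆ A}
  not_empty_mem h := K.not_empty_mem h.1
  down_closed := by
    intro s t hs hts ht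
    exact ⟨K.down_closed hs.1 hts ht, (Finset.coe_subset.mpr hts).trans hs.2⟩

/-- The intersection of two (sub)complexes. -/
def inter (K L : SComplex V) : SComplex V where
  faces := K.faces ∩ L.faces
  not_empty_mem h := K.not_empty_mem h.1
  down_closed := by
    intro s t hs hts ht
    exact ⟨K.down_closed hs.1 hts ht, L.down_closed hs.2 hts ht⟩

/-- The link of a simplex `σ` in `K`. -/
def link (K : SComplex V) (σ : Finset V) : SComplex V where
  faces := {τ | τ.Nonempty ∧ Disjoint τ σ ∧ τ ∪ σ ∈ K.faces}
  not_empty_mem h := Finset.not_nonempty_empty h.1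
  down_closed := by
    intro s t hs hts ht
    exact ⟨ht, hs.2.1.mono_left hts,
      K.down_closed hs.2.2 (Finset.union_subset_union_left hts)
        (ht.mono Finset.subset_union_left)⟩

/-- A simplicial complex is aspherical if all of its higher homotopy groups
(at every basepoint of its realization) vanish. -/
def Aspherical (K : SComplex V) : Prop :=
  ∀ n : ℕ, 2 ≤ n → ∀ x : ↥K.space, Subsingleton (HomotopyGroup (Fin n) ↥K.space x)

/-- A flag simplicial complex is SimpHAtic (simplicially hereditarily aspherical) if
every full subcomplex of it is aspherical. -/
def SimpHAtic (K : SComplex V) : Prop :=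
  K.Flag ∧ ∀ A : Set V, (K.fullSub A).Aspherical

end SComplex

/-- A simplicial map between simplicial complexes (given on vertices): faces map to faces. -/
def IsSimplicialMap {V W : Type} (K : SComplex V) (L : SComplex W) (f : V → W) : Prop :=
  ∀ s ∈ K.faces, s.image f ∈ L.faces

/-! ## Homotopy pro-groups at infinity -/

/-- The round `n`-sphere in `ℝ^(n+1)`. -/
def euclSphere (n : ℕ) : Set (EuclideanSpace ℝ (Fin (n + 1))) := Metric.sphere 0 1

/-- The closed `(n+1)`-ball in `ℝ^(n+1)`. -/
def euclBall (n : ℕ) : Set (EuclideanSpace ℝ (Fin (n + 1))) := Metric.closedBall 0 1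

/-- The `n`-th homotopy pro-group at infinity of the complex `K` vanishes
(`π_n^∞(K) = 0`): for every finite subcomplex `M` of `K` there is a subcomplex
`M' ⊇ M` with finite `(n+1)`-skeleton such that every (continuous) map
`Sⁿ → K − M'` extends to a map `B^{n+1} → K − M`. -/
def PiInftyVanishes {V : Type} (K : SComplex V) (n : ℕ) : Prop :=
  ∀ M : SComplex V, M.IsSubcomplex K → M.faces.Finite →
    ∃ M' : SComplex V, M'.IsSubcomplex K ∧ M.IsSubcomplex M' ∧
      (M'.skeleton (n + 1)).faces.Finite ∧
      ∀ f : EuclideanSpace ℝ (Fin (n + 1)) → V → ℝ,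
        ContinuousOn f (euclSphere n) → f '' euclSphere n ⊆ (K.compl M').space →
        ∃ F : EuclideanSpace ℝ (Fin (n + 1)) → V → ℝ,
          ContinuousOn F (euclBall n) ∧ F '' euclBall n ⊆ (K.compl M).space ∧
          ∀ x ∈ euclSphere n, F x = f x

/-! ## Group actions on simplicial complexes -/

section Actions

variable {G V : Type} [Group G]

/-- `ρ` is an action of `G` on the complex `K` by simplicial automorphisms. -/
def IsSimplicialAction (ρ : G →* Equiv.Perm V) (K : SComplex V) : Prop :=
  ∀ g : G, ∀ s ∈ K.faces, s.image (ρ g) ∈ K.faces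

/-- The action is proper: all cell (face) stabilizers are finite. -/
def ProperAction (ρ : G →* Equiv.Perm V) (K : SComplex V) : Prop :=
  ∀ s ∈ K.faces, {g : G | s.image (ρ g) = s}.Finite

/-- The action is free: all cell (face) stabilizers are trivial. -/
def FreeAction (ρ : G →* Equiv.Perm V) (K : SComplex V) : Prop :=
  ∀ g : G, ∀ s ∈ K.faces, s.image (ρ g) = s → g = 1

/-- The `n`-skeleton of `K` is finite mod `G`: finitely many `G`-orbits of faces. -/
def CocompactSkeleton (ρ : G →* Equiv.Perm V) (K : SComplex V) (n : ℕ) : Prop :=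
  ∃ T : Set (Finset V), T.Finite ∧
    ∀ s ∈ (K.skeleton n).faces, ∃ g : G, ∃ t ∈ T, t.image (ρ g) = s

/-- A geometric action: a simplicial action on a finite-dimensional contractible complex,
with finite cell stabilizers and every skeleton finite mod `G`. -/
def GeometricAction (ρ : G →* Equiv.Perm V) (K : SComplex V) : Prop :=
  IsSimplicialAction ρ K ∧ K.FiniteDim ∧ ContractibleSpace ↥K.space ∧
    ProperAction ρ K ∧ ∀ n : ℕ, CocompactSkeleton ρ K n

end Actions

/-- An `n`-connected topological space: nonempty and all homotopy groups `π_k`, `k ≤ n`,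
are trivial at every basepoint. -/
def NConnectedSpace (X : Type) [TopologicalSpace X] (n : ℕ) : Prop :=
  Nonempty X ∧ ∀ k : ℕ, k ≤ n → ∀ x : X, Subsingleton (HomotopyGroup (Fin k) X x)

/-- `π_n^∞(G) = 0` for a group `G`: for every (equivalently, some) `n`-connected proper
`G`-complex with `(n+1)`-skeleton finite mod `G`, the `n`-th homotopy pro-group at
infinity vanishes. -/
def GroupPiInftyVanishes (G : Type) [Group G] (n : ℕ) : Prop :=
  ∀ (V : Type) (K : SComplex V) (ρ : G →* Equiv.Perm V),
    IsSimplicialAction ρ K → ProperAction ρ K → NConnectedSpace ↥K.space n →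
      CocompactSkeleton ρ K (n + 1) → PiInftyVanishes K n

/-- `π_n^∞(G) ≠ 0` for a group `G`: for some (equivalently, every) `n`-connected proper
`G`-complex with `(n+1)`-skeleton finite mod `G`, the `n`-th homotopy pro-group at
infinity does not vanish. -/
def GroupPiInftyNonzero (G : Type) [Group G] (n : ℕ) : Prop :=
  ∃ (V : Type) (K : SComplex V) (ρ : G →* Equiv.Perm V),
    IsSimplicialAction ρ K ∧ ProperAction ρ K ∧ NConnectedSpace ↥K.space n ∧
      CocompactSkeleton ρ K (n + 1) ∧ ¬ PiInftyVanishes K n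

/-! ## Group-theoretic notions -/

/-- A group is finitely presented if it is isomorphic to a presented group on finitely
many generators with finitely many relators. -/
def FinitelyPresentedGroup (G : Type) [Group G] : Prop :=
  ∃ (m : ℕ) (rels : Finset (FreeGroup (Fin m))),
    Nonempty (PresentedGroup (rels : Set (FreeGroup (Fin m))) ≃* G)

/-- A group is free if it is isomorphic to a free group on some set. -/
def IsFreeGroupProp (G : Type) [Group G] : Prop :=
  ∃ S : Type, Nonempty (FreeGroup S ≃* G)

/-- A group is virtually free if it has a free subgroup of finite index. -/
def VirtuallyFree (G : Type) [Group G] : Prop :=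
  ∃ H : Subgroup G, H.FiniteIndex ∧ IsFreeGroupProp ↥H

/-- A group is virtually non-abelian free if it has a non-abelian free subgroup of
finite index. -/
def VirtuallyNonabelianFree (G : Type) [Group G] : Prop :=
  ∃ H : Subgroup G, H.FiniteIndex ∧ IsFreeGroupProp ↥H ∧ ¬ ∀ a b : ↥H, a * b = b * a

/-- A group has type `F_n` if it admits a free simplicial action on a contractible
complex whose `n`-skeleton is finite mod `G`. -/
def HasTypeF (G : Type) [Group G] (n : ℕ) : Prop :=
  ∃ (V : Type) (K : SComplex V) (ρ : G →* Equiv.Perm V),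
    IsSimplicialAction ρ K ∧ FreeAction ρ K ∧ ContractibleSpace ↥K.space ∧
      CocompactSkeleton ρ K n

/-- A group is SimpHAtic if it acts geometrically on a simply connected SimpHAtic
simplicial complex. -/
def IsSimpHAticGroup (G : Type) [Group G] : Prop :=
  ∃ (V : Type) (K : SComplex V) (ρ : G →* Equiv.Perm V),
    GeometricAction ρ K ∧ SimplyConnectedSpace ↥K.space ∧ K.SimpHAtic

/-! ## Cayley graphs, word metric, hyperbolicity -/

/-- The Cayley graph of `G` with respect to a (symmetrized) generating set `S`. -/
def cayleyGraph (G : Type) [Group G] (S : Set G) : SimpleGraph G where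
  Adj g h := g ≠ h ∧ (g⁻¹ * h ∈ S ∨ h⁻¹ * g ∈ S)
  symm := ⟨fun g h hx => ⟨hx.1.symm, hx.2.symm⟩⟩
  loopless := ⟨fun g hg => hg.1 rfl⟩

/-- A finitely generated group is (Gromov) hyperbolic: for some finite generating set,
the word metric (= graph metric on the Cayley graph) satisfies the `δ`-hyperbolic
four-point condition. -/
def IsHyperbolicGroup (G : Type) [Group G] : Prop :=
  ∃ S : Finset G, Subgroup.closure (S : Set G) = ⊤ ∧
    ∃ δ : ℕ, ∀ x y z w : G,
      (cayleyGraph G ↑S).dist x z + (cayleyGraph G ↑S).dist y w ≤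
        max ((cayleyGraph G ↑S).dist x y + (cayleyGraph G ↑S).dist z w)
          ((cayleyGraph G ↑S).dist x w + (cayleyGraph G ↑S).dist y z) + 2 * δ

/-! ## Systolic and weakly systolic complexes -/

namespace SComplex

variable {V : Type}

/-- `K` contains a full cycle of length `m`: an embedded `m`-cycle with no chords
(hence a full subcomplex that is a triangulated circle). -/
def HasFullCycle (K : SComplex V) (m : ℕ) : Prop :=
  ∃ c : ZMod m → V, Function.Injective c ∧
    (∀ i, ({c i, c (i + 1)} : Finset V) ∈ K.faces) ∧
    ∀ i j, ({c i, c j} : Finset V) ∈ K.faces → i = j ∨ j = i + 1 ∨ i = j + 1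

/-- A flag simplicial complex is `k`-large if it has no full cycles of length `< k`. -/
def Large (K : SComplex V) (k : ℕ) : Prop :=
  K.Flag ∧ ∀ m : ℕ, 3 ≤ m → m < k → ¬ K.HasFullCycle m

/-- A complex is locally `k`-large if all links of its faces are `k`-large. -/
def LocallyLarge (K : SComplex V) (k : ℕ) : Prop :=
  ∀ σ ∈ K.faces, (K.link σ).Large k

/-- A systolic complex: a simply connected, locally `6`-large flag simplicial complex. -/
def Systolic (K : SComplex V) : Prop :=
  K.Flag ∧ SimplyConnectedSpace ↥K.space ∧ K.LocallyLarge 6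

/-- The `SD₂*` property: `K` is locally `5`-large, and every `5`-wheel with a pendant
triangle in `K` is contained in the `1`-ball around some vertex. -/
def SD2Star (K : SComplex V) : Prop :=
  K.LocallyLarge 5 ∧
  ∀ (w p : V) (c : ZMod 5 → V),
    Function.Injective c → w ∉ Set.range c → p ∉ Set.range c → p ≠ w →
    (∀ i, ({c i, c (i + 1)} : Finset V) ∈ K.faces) →
    (∀ i, ({w, c i} : Finset V) ∈ K.faces) →
    (∃ i, ({p, c i} : Finset V) ∈ K.faces ∧ ({p, c (i + 1)} : Finset V) ∈ K.faces) →
    ∃ z : V, (w = z ∨ ({w, z} : Finset V) ∈ K.faces) ∧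
      (p = z ∨ ({p, z} : Finset V) ∈ K.faces) ∧
      ∀ i, c i = z ∨ ({c i, z} : Finset V) ∈ K.faces

/-- A weakly systolic complex: a simply connected flag simplicial complex with the
`SD₂*` property. -/
def WeaklySystolic (K : SComplex V) : Prop :=
  K.Flag ∧ SimplyConnectedSpace ↥K.space ∧ K.SD2Star

/-- A weakly systolic complex with `SD₂*` links. -/
def WeaklySystolicWithSD2StarLinks (K : SComplex V) : Prop :=
  K.WeaklySystolic ∧ ∀ σ ∈ K.faces, (K.link σ).SD2Star

end SComplex

/-! ## Nonpositively curved 2-complexes -/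

/-- Every pair of points has a metric midpoint (geodesicity, for complete spaces). -/
def MidpointSpace (Y : Type) [MetricSpace Y] : Prop :=
  ∀ x y : Y, ∃ m : Y, dist x m = dist x y / 2 ∧ dist m y = dist x y / 2

/-- The CAT(0) (CN-)inequality holds for points of the subset `s`. -/
def CAT0On (Y : Type) [MetricSpace Y] (s : Set Y) : Prop :=
  ∀ x ∈ s, ∀ y ∈ s, ∀ z ∈ s, ∀ m ∈ s,
    dist y m = dist y z / 2 → dist m z = dist y z / 2 →
    dist x m ^ 2 ≤ (dist x y ^ 2 + dist x z ^ 2) / 2 - dist y z ^ 2 / 4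

/-- Locally CAT(0): each point has a ball on which the CAT(0) inequality holds. -/
def LocallyCAT0 (Y : Type) [MetricSpace Y] : Prop :=
  ∀ p : Y, ∃ ε : ℝ, 0 < ε ∧ CAT0On Y (Metric.ball p ε)

/-- A witness that the 2-complex `K` carries a nonpositively curved (locally CAT(0))
piecewise Euclidean geometry: a geodesic, locally CAT(0) metric model `Y` of the
realization of `K`, in which each (at most 2-dimensional) simplex embeds isometrically
into the Euclidean plane. -/
def NPC2Witness {V : Type} (K : SComplex V) (Y : Type) [MetricSpace Y] : Prop :=
  ∃ h : ↥K.space ≃ₜ Y, MidpointSpace Y ∧ LocallyCAT0 Y ∧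
    ∀ s ∈ K.faces,
      ∃ φ : ↥(⇑h '' {x : ↥K.space | ∀ v, (x : V → ℝ) v ≠ 0 → v ∈ s}) →
          EuclideanSpace ℝ (Fin 2), Isometry φ

/-- A nonpositively curved 2-complex: a 2-dimensional complex whose realization carries a
geodesic locally CAT(0) piecewise Euclidean metric. -/
def IsNPC2Complex {V : Type} (K : SComplex V) : Prop :=
  (∀ s ∈ K.faces, s.card ≤ 3) ∧ ∃ (Y : Type) (mY : MetricSpace Y), @NPC2Witness V K Y mY

/-! ## Graphical small cancellation complexes (via their SimpHAtic subdivisions) -/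

/-- Transport of a realization point along a permutation of the vertices. -/
def permPoint {V : Type} (e : Equiv.Perm V) (f : V → ℝ) : V → ℝ := fun v => f (e.symm v)

/-- A (simply connected) graphical small cancellation complex, encoded through the
property that an appropriate simplicial subdivision of it is SimpHAtic: `K` (with the
`G`-action `ρ`) admits a `G`-equivariant simplicial subdivision `K'` (a complex with a
geometric `G`-action, equivariantly homeomorphic to `K`, whose cells refine those of
`K`) that is a flag complex all of whose full subcomplexes are aspherical. -/
def IsGraphicalSmallCancellation {G V : Type} [Group G] (ρ : G →* Equiv.Perm V)
    (K : SComplex V) : Prop :=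
  ∃ (V' : Type) (K' : SComplex V') (ρ' : G →* Equiv.Perm V') (h : ↥K'.space ≃ₜ ↥K.space),
    K'.SimpHAtic ∧ GeometricAction ρ' K' ∧
    (∀ s' ∈ K'.faces, ∃ s ∈ K.faces, ∀ x : ↥K'.space,
      (∀ v', (x : V' → ℝ) v' ≠ 0 → v' ∈ s') → ∀ v, (h x : V → ℝ) v ≠ 0 → v ∈ s) ∧
    ∀ (g : G) (x y : ↥K'.space), (y : V' → ℝ) = permPoint (ρ' g) ↑x →
      (h y : V → ℝ) = permPoint (ρ g) ↑(h x)

/-! ## Rips complexes and asymptotic hereditary asphericity (AHA) -/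

/-- The Rips complex `P_r(A)` of a subset `A` of a space with (integer-valued) metric
`d`: faces are the nonempty finite subsets of `A` of diameter at most `r`. -/
def RipsComplex {X : Type} (d : X → X → ℕ) (A : Set X) (r : ℕ) : SComplex X where
  faces := {s | s.Nonempty ∧ ↑s ⊆ A ∧ ∀ x ∈ s, ∀ y ∈ s, d x y ≤ r}
  not_empty_mem h := Finset.not_nonempty_empty h.1
  down_closed := by
    intro s t hs hts ht
    exact ⟨ht, (Finset.coe_subset.mpr hts).trans hs.2.1,
      fun x hx y hy => hs.2.2 x (hts hx) y (hts hy)⟩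

/-- `C` is `(n; r, R)`-aspherical in `D`: every simplicial map to `P_r(C)` from a
triangulation of the `n`-sphere extends to a simplicial map to `P_R(D)` from a
triangulation of the `(n+1)`-ball whose boundary is the given sphere. -/
def NRAspherical {X : Type} (d : X → X → ℕ) (C D : Set X) (n r R : ℕ) : Prop :=
  ∀ (VT : Type) (T : SComplex VT), T.faces.Finite →
    Nonempty (↥T.space ≃ₜ ↥(euclSphere n)) →
    ∀ f : VT → X, IsSimplicialMap T (RipsComplex d C r) f →
      ∃ (W : Type) (B : SComplex (VT ⊕ W)), B.faces.Finite ∧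
        (∀ s ∈ T.faces, s.image Sum.inl ∈ B.faces) ∧
        (∃ h : ↥B.space ≃ₜ ↥(euclBall n),
          ⇑h '' {x : ↥B.space | ((x : (VT ⊕ W) → ℝ) ∘ Sum.inl) ∈ T.space ∧
              ∀ w, (x : (VT ⊕ W) → ℝ) (Sum.inr w) = 0} =
            {y : ↥(euclBall n) | (y : EuclideanSpace ℝ (Fin (n + 1))) ∈ euclSphere n}) ∧
        ∃ F : (VT ⊕ W) → X, IsSimplicialMap B (RipsComplex d D R) F ∧
          ∀ v, F (Sum.inl v) = f v

/-- A finitely generated group is asymptotically hereditarily aspherical (AHA) if, with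
respect to the word metric of some finite generating set, for every `r > 0` there is
`R ≥ r` such that every subset is `(n; r, R)`-aspherical in itself for every `n ≥ 2`. -/
def IsAHAGroup (G : Type) [Group G] : Prop :=
  ∃ S : Finset G, Subgroup.closure (S : Set G) = ⊤ ∧
    ∀ r : ℕ, 0 < r → ∃ R : ℕ, r ≤ R ∧
      ∀ (A : Set G) (n : ℕ), 2 ≤ n → NRAspherical (cayleyGraph G ↑S).dist A A n r R

/-! ## Cohomological dimension -/

open CategoryTheory in
/-- A group has finite cohomological dimension (over `ℤ`) if there is `n` such that all
cohomology groups `H^k(G, M)` vanish for `k > n` and all `G`-modules `M`. -/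
def FiniteCohDim (G : Type) [Group G] : Prop :=
  ∃ n : ℕ, ∀ (M : Rep ℤ G) (k : ℕ), n < k → Limits.IsZero (groupCohomology M k)

/-- A group has finite virtual cohomological dimension if it has a finite-index subgroup
of finite cohomological dimension. -/
def FiniteVCD (G : Type) [Group G] : Prop :=
  ∃ H : Subgroup G, H.FiniteIndex ∧ FiniteCohDim ↥H

/-! ## Miscellaneous: coverings, products, proper maps -/

/-- A simplicial covering map `p : K' → K`: a simplicial map, injective on each face,
surjective on faces, and such that each face of `K` at the image of a vertex lifts
uniquely through that vertex. -/
def IsSimplicialCovering {V' V : Type} (K' : SComplex V') (K : SComplex V)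
    (p : V' → V) : Prop :=
  IsSimplicialMap K' K p ∧
  (∀ s ∈ K'.faces, (s.image p).card = s.card) ∧
  (∀ s ∈ K.faces, ∃ s' ∈ K'.faces, s'.image p = s) ∧
  ∀ v' : V', ({v'} : Finset V') ∈ K'.faces → ∀ s ∈ K.faces, p v' ∈ s →
    ∃! s' : Finset V', s' ∈ K'.faces ∧ v' ∈ s' ∧ s'.image p = s

/-- A simplicial complex triangulating the product of the realizations of `K` and `L`
(the order complex of the product of the face posets). -/
def prodComplex {V W : Type} (K : SComplex V) (L : SComplex W) :
    SComplex (Finset V × Finset W) where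
  faces := {s | s.Nonempty ∧ (∀ p ∈ s, p.1 ∈ K.faces ∧ p.2 ∈ L.faces) ∧
    ∀ p ∈ s, ∀ q ∈ s, (p.1 ⊆ q.1 ∧ p.2 ⊆ q.2) ∨ (q.1 ⊆ p.1 ∧ q.2 ⊆ p.2)}
  not_empty_mem h := Finset.not_nonempty_empty h.1
  down_closed := by
    intro s t hs hts ht
    exact ⟨ht, fun p hp => hs.2.1 p (hts hp), fun p hp q hq => hs.2.2 p (hts hp) q (hts hq)⟩

/-- A topologically proper map: preimages of compact sets are compact. -/
def TopProper {X Y : Type} [TopologicalSpace X] [TopologicalSpace Y] (f : X → Y) : Prop :=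
  ∀ C : Set Y, IsCompact C → IsCompact (f ⁻¹' C)

/-- A map between realizations is cellular if it maps each skeleton into the
corresponding skeleton. -/
def CellularMap {V W : Type} (X : SComplex V) (Y : SComplex W)
    (f : ↥X.space → ↥Y.space) : Prop :=
  ∀ (m : ℕ) (x : ↥X.space), (x : V → ℝ) ∈ (X.skeleton m).space →
    (f x : W → ℝ) ∈ (Y.skeleton m).space

/-- Condition (∗): every simplicial map to `X` from a triangulation `S` of the 2-sphere
extends to a simplicial map to `X` from a triangulation `D` of the 3-disc whose boundary
is `S` and which has no internal vertices (`D⁰ = S⁰`). -/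
def StarCondition {V : Type} (X : SComplex V) : Prop :=
  ∀ (VS : Type) (S : SComplex VS), S.faces.Finite →
    Nonempty (↥S.space ≃ₜ ↥(euclSphere 2)) →
    ∀ f : VS → V, IsSimplicialMap S X f →
      ∃ D : SComplex VS, S.IsSubcomplex D ∧ D.vertexSet = S.vertexSet ∧
        (∃ h : ↥D.space ≃ₜ ↥(euclBall 2),
          ⇑h '' {x : ↥D.space | (x : VS → ℝ) ∈ S.space} =
            {y : ↥(euclBall 2) | (y : EuclideanSpace ℝ (Fin 3)) ∈ euclSphere 2}) ∧
        ∃ F : VS → V, IsSimplicialMap D X F ∧ ∀ v ∈ S.vertexSet, F v = f v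

/-- A group is virtually cyclic if it has a cyclic subgroup of finite index. -/
def VirtuallyCyclic (G : Type) [Group G] : Prop :=
  ∃ H : Subgroup G, H.FiniteIndex ∧ IsCyclic ↥H

/-!
Write `|g|` for the word length. Let `N` be infinite. Since `N` is normal and virtually cyclic, it
contains an element `u` of infinite order and some `u ^ D`, `D > 0`, all of whose conjugates are
powers of `u`. As only finitely many powers of `u` are short, conjugates of powers of `u` become
arbitrarily long, so some power of `u` has a conjugate `w` that is shortest in its conjugacy class
and long compared with `δ`. For such a `w` the four-point condition makes `k ↦ w ^ k` a
quasi-geodesic: `k ≤ |w ^ k|` and `|w ^ j| + |w ^ k| ≤ |w ^ (j + k)| + 8δ`. Comparing growth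
rates, every conjugate of a suitable power `b ∈ N` of `w` is `b` or `b⁻¹`. An element
commuting with `b` and shortest in its coset modulo `⟨b⟩` lies close to a geodesic from `1` to
a long power of `b` or `b⁻¹`, which bounds its length; hence finitely many elements represent
all cosets of `N`.
-/

namespace cayleyGraph

variable {G : Type} [Group G] {S : Set G}

@[simps]
def mulLeft (S : Set G) (g : G) : cayleyGraph G S →g cayleyGraph G S where
  toFun x := g * x
  map_rel' {x y} h := ⟨by simpa using h.1, by simpa [mul_assoc] using h.2⟩

theorem connected (hS : Subgroup.closure S = ⊤) : (cayleyGraph G S).Connected := by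
  let H : Subgroup G :=
    { carrier := {g | (cayleyGraph G S).Reachable 1 g}
      one_mem' := .refl 1
      mul_mem' := fun {a b} ha hb => ha.trans (by simpa using hb.map (mulLeft S a))
      inv_mem' := fun {a} ha => by simpa using (ha.map (mulLeft S a⁻¹)).symm }
  have hSH : Subgroup.closure S ≤ H := by
    refine (Subgroup.closure_le H).2 fun s hs => ?_
    by_cases h1 : 1 = s
    · exact h1 ▸ .refl 1
    · exact SimpleGraph.Adj.reachable ⟨h1, .inl (by simpa using hs)⟩
  have hreach (g : G) : (cayleyGraph G S).Reachable 1 g := hSH (hS ▸ Subgroup.mem_top g)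
  have : Nonempty G := ⟨1⟩
  exact ⟨fun x y => (hreach x).symm.trans (hreach y)⟩

theorem dist_mul_left_le (g x y : G) :
    (cayleyGraph G S).dist (g * x) (g * y) ≤ (cayleyGraph G S).dist x y := by
  by_cases h : (cayleyGraph G S).Reachable x y
  · obtain ⟨p, hp⟩ := h.exists_walk_length_eq_dist
    calc _ ≤ (p.map (mulLeft S g)).length := SimpleGraph.dist_le _
      _ = _ := by rw [SimpleGraph.Walk.length_map, hp]
  · have h' : ¬(cayleyGraph G S).Reachable (g * x) (g * y) := fun hr =>
      h (by simpa using hr.map (mulLeft S g⁻¹))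
    rw [SimpleGraph.dist_eq_zero_of_not_reachable h']
    exact Nat.zero_le _

theorem dist_mul_left (g x y : G) :
    (cayleyGraph G S).dist (g * x) (g * y) = (cayleyGraph G S).dist x y :=
  (dist_mul_left_le g x y).antisymm (by simpa using dist_mul_left_le g⁻¹ (g * x) (g * y))

end cayleyGraph

section WordNorm

variable {G : Type} [Group G] {S : Set G}

def wordNorm (S : Set G) (g : G) : ℕ := (cayleyGraph G S).dist 1 g

theorem cayleyGraph.dist_eq_wordNorm (x y : G) :
    (cayleyGraph G S).dist x y = wordNorm S (x⁻¹ * y) := by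
  simpa [wordNorm] using (cayleyGraph.dist_mul_left x⁻¹ x y).symm

@[simp]
theorem wordNorm_one : wordNorm S 1 = 0 := SimpleGraph.dist_self

@[simp]
theorem wordNorm_inv (g : G) : wordNorm S g⁻¹ = wordNorm S g := by
  rw [wordNorm, SimpleGraph.dist_comm, cayleyGraph.dist_eq_wordNorm, mul_one, inv_inv]

theorem wordNorm_mul_le (hS : Subgroup.closure S = ⊤) (x y : G) :
    wordNorm S (x * y) ≤ wordNorm S x + wordNorm S y := by
  have := (cayleyGraph.connected hS).dist_triangle (u := 1) (v := x) (w := x * y)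
  rwa [cayleyGraph.dist_eq_wordNorm x, inv_mul_cancel_left] at this

theorem wordNorm_conj_le (hS : Subgroup.closure S = ⊤) (g x : G) :
    wordNorm S (g * x * g⁻¹) ≤ wordNorm S x + 2 * wordNorm S g := by
  have h₁ := wordNorm_mul_le hS (g * x) g⁻¹
  have h₂ := wordNorm_mul_le hS g x
  rw [wordNorm_inv] at h₁
  omega

theorem wordNorm_pow_le (hS : Subgroup.closure S = ⊤) (x : G) (n : ℕ) :
    wordNorm S (x ^ n) ≤ n * wordNorm S x := by
  induction n with
  | zero => simp
  | succ n ih =>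
    rw [pow_succ, add_one_mul]
    exact (wordNorm_mul_le hS _ _).trans (by omega)

theorem wordNorm_zpow (x : G) (z : ℤ) : wordNorm S (x ^ z) = wordNorm S (x ^ z.natAbs) := by
  obtain ⟨n, rfl | rfl⟩ := z.eq_nat_or_neg <;> simp

theorem exists_wordNorm_eq_of_le (hS : Subgroup.closure S = ⊤) {w : G} {t : ℕ}
    (ht : t ≤ wordNorm S w) :
    ∃ u, wordNorm S u = t ∧ wordNorm S (u⁻¹ * w) = wordNorm S w - t := by
  obtain ⟨p, hp⟩ := (cayleyGraph.connected hS).exists_walk_length_eq_dist 1 w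
  refine ⟨p.getVert t, ?_⟩
  have h₁ : wordNorm S (p.getVert t) ≤ t := by
    simpa [wordNorm, ht.trans_eq hp.symm] using SimpleGraph.dist_le (p.take t)
  have h₂ : wordNorm S ((p.getVert t)⁻¹ * w) ≤ wordNorm S w - t := by
    rw [← cayleyGraph.dist_eq_wordNorm]
    simpa [wordNorm, hp] using SimpleGraph.dist_le (p.drop t)
  have h₃ := wordNorm_mul_le hS (p.getVert t) ((p.getVert t)⁻¹ * w)
  rw [mul_inv_cancel_left] at h₃
  omega

open Pointwise in
theorem finite_setOf_wordNorm_le (hSfin : S.Finite) (hS : Subgroup.closure S = ⊤) (R : ℕ) :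
    {g | wordNorm S g ≤ R}.Finite := by
  set T : Set G := S ∪ S⁻¹
  have hwalk {a b : G} (p : (cayleyGraph G S).Walk a b) : a⁻¹ * b ∈ T ^ p.length := by
    induction p with
    | nil => simp
    | @cons a c b hadj q ih =>
      rw [SimpleGraph.Walk.length_cons, pow_succ']
      have hac : a⁻¹ * c ∈ T := hadj.2.imp id fun h => by simpa using h
      simpa [mul_assoc] using Set.mul_mem_mul hac ih
  have hT (n : ℕ) : (T ^ n).Finite := by
    induction n with
    | zero => exact Set.finite_one
    | succ n ih => exact pow_succ T n ▸ ih.mul (hSfin.union hSfin.inv)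
  refine ((Set.finite_le_nat R).biUnion fun n _ => hT n).subset fun g hg => ?_
  obtain ⟨p, hp⟩ := (cayleyGraph.connected hS).exists_walk_length_eq_dist 1 g
  exact Set.mem_biUnion (x := p.length) (hp.trans_le hg) (by simpa using hwalk p)

end WordNorm

structure QuasiGeodesicPowers {G : Type} [Group G] (S : Set G) (B : ℕ) (b : G) : Prop where
  le_wordNorm_pow (k : ℕ) : k ≤ wordNorm S (b ^ k)
  wordNorm_pow_add_ge (j k : ℕ) :
    wordNorm S (b ^ j) + wordNorm S (b ^ k) ≤ wordNorm S (b ^ (j + k)) + B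

namespace QuasiGeodesicPowers

variable {G : Type} [Group G] {S : Set G} {B : ℕ} {b : G}

theorem not_isOfFinOrder (h : QuasiGeodesicPowers S B b) : ¬IsOfFinOrder b := fun hb => by
  obtain ⟨k, hk, hbk⟩ := isOfFinOrder_iff_pow_eq_one.1 hb
  have := h.le_wordNorm_pow k
  rw [hbk, wordNorm_one] at this
  omega

theorem inv (h : QuasiGeodesicPowers S B b) : QuasiGeodesicPowers S B b⁻¹ where
  le_wordNorm_pow k := by simpa [inv_pow] using h.le_wordNorm_pow k
  wordNorm_pow_add_ge j k := by simpa [inv_pow] using h.wordNorm_pow_add_ge j k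

theorem pow (h : QuasiGeodesicPowers S B b) {D : ℕ} (hD : 0 < D) :
    QuasiGeodesicPowers S B (b ^ D) where
  le_wordNorm_pow k := by
    rw [← pow_mul]
    exact (Nat.le_mul_of_pos_left k hD).trans (h.le_wordNorm_pow _)
  wordNorm_pow_add_ge j k := by
    simpa only [← pow_mul, mul_add] using h.wordNorm_pow_add_ge (D * j) (D * k)

theorem mul_wordNorm_pow_le (h : QuasiGeodesicPowers S B b) (a n : ℕ) :
    a * wordNorm S (b ^ n) ≤ wordNorm S (b ^ (a * n)) + a * B := by
  induction a with
  | zero => simp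
  | succ a ih =>
    have := h.wordNorm_pow_add_ge (a * n) n
    simp only [add_one_mul] at this ⊢
    omega

/-- `|b ^ (a * n)|` grows like `a * |b ^ n|`, which outgrows `c * |b ^ n|` when `c < a`. -/
theorem le_of_forall_wordNorm_pow_le (hS : Subgroup.closure S = ⊤)
    (h : QuasiGeodesicPowers S B b) {a c C : ℕ}
    (hac : ∀ n, wordNorm S (b ^ (a * n)) ≤ wordNorm S (b ^ (c * n)) + C) : a ≤ c := by
  by_contra! hca
  set n := C + a * B + 1
  have h₁ := h.mul_wordNorm_pow_le a n
  have h₂ := wordNorm_pow_le hS (b ^ n) c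
  rw [← pow_mul, mul_comm] at h₂
  have h₃ := h.le_wordNorm_pow n
  have h₄ := hac n
  have h₅ := Nat.mul_le_mul_right (wordNorm S (b ^ n)) hca
  simp only [Nat.succ_mul] at h₅
  omega

theorem natAbs_eq_of_conj_pow_eq_zpow (hS : Subgroup.closure S = ⊤)
    (h : QuasiGeodesicPowers S B b) {g : G} {D : ℕ} {m : ℤ}
    (hrel : g * b ^ D * g⁻¹ = b ^ m) : m.natAbs = D := by
  have hrel' (n : ℕ) : g * b ^ (D * n) * g⁻¹ = b ^ (m * n) := by
    rw [pow_mul, ← conj_pow, hrel, ← zpow_natCast, ← zpow_mul]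
  refine le_antisymm (h.le_of_forall_wordNorm_pow_le hS (C := 2 * wordNorm S g) fun n => ?_)
    (h.le_of_forall_wordNorm_pow_le hS (C := 2 * wordNorm S g) fun n => ?_)
  · have := wordNorm_conj_le hS g (b ^ (D * n))
    rwa [hrel', wordNorm_zpow, Int.natAbs_mul, Int.natAbs_natCast] at this
  · have := wordNorm_conj_le hS g⁻¹ (g * b ^ (D * n) * g⁻¹)
    rwa [show g⁻¹ * (g * b ^ (D * n) * g⁻¹) * g⁻¹⁻¹ = b ^ (D * n) by group, hrel',
      wordNorm_inv, wordNorm_zpow, Int.natAbs_mul, Int.natAbs_natCast] at this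

theorem conj_pow_eq_or_eq_inv (hS : Subgroup.closure S = ⊤) (h : QuasiGeodesicPowers S B b)
    {g : G} {D : ℕ} {m : ℤ} (hrel : g * b ^ D * g⁻¹ = b ^ m) :
    g * b ^ D * g⁻¹ = b ^ D ∨ g * b ^ D * g⁻¹ = (b ^ D)⁻¹ := by
  rcases Int.natAbs_eq_iff.1 (h.natAbs_eq_of_conj_pow_eq_zpow hS hrel) with rfl | rfl
  · exact .inl (by simpa using hrel)
  · exact .inr (by simpa [zpow_neg] using hrel)

end QuasiGeodesicPowers

section Hyperbolic

variable {G : Type} [Group G] {S : Set G}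

def FourPointCondition (S : Set G) (δ : ℕ) : Prop :=
  ∀ x y z w : G,
    (cayleyGraph G S).dist x z + (cayleyGraph G S).dist y w ≤
      max ((cayleyGraph G S).dist x y + (cayleyGraph G S).dist z w)
        ((cayleyGraph G S).dist x w + (cayleyGraph G S).dist y z) + 2 * δ

/-- Twice the Gromov product `(x | y)` based at `1`, so as to stay in `ℤ`. -/
def gromovProduct (S : Set G) (x y : G) : ℤ :=
  wordNorm S x + wordNorm S y - wordNorm S (x⁻¹ * y)

theorem FourPointCondition.min_gromovProduct_le {δ : ℕ} (h : FourPointCondition S δ)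
    (x y z : G) :
    min (gromovProduct S x y) (gromovProduct S y z) ≤ gromovProduct S x z + 2 * δ := by
  have := h x y z 1
  simp only [cayleyGraph.dist_eq_wordNorm, mul_one, wordNorm_inv] at this
  simp only [gromovProduct]
  omega

def IsConjMinimal (S : Set G) (w : G) : Prop :=
  ∀ g : G, wordNorm S w ≤ wordNorm S (g * w * g⁻¹)

theorem exists_isConjMinimal_conj (S : Set G) (x : G) :
    ∃ p : G, IsConjMinimal S (p * x * p⁻¹) := by
  obtain ⟨p, hp⟩ : ∃ p, ∀ q, wordNorm S (p * x * p⁻¹) ≤ wordNorm S (q * x * q⁻¹) :=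
    ⟨_, fun q => Function.argmin_le (fun q => wordNorm S (q * x * q⁻¹)) q⟩
  refine ⟨p, fun g => ?_⟩
  simpa only [mul_assoc, mul_inv_rev] using hp (g * p)

variable {δ : ℕ} (hS : Subgroup.closure S = ⊤) (hδ : FourPointCondition S δ) {w : G}
include hS hδ

theorem IsConjMinimal.two_mul_wordNorm_le (hw : IsConjMinimal S w)
    (hlong : 4 * δ + 2 ≤ wordNorm S w) :
    2 * wordNorm S w ≤ wordNorm S (w * w) + 4 * δ := by
  -- `u` is a midpoint of a geodesic from `1` to `w`; minimality gives `|w| ≤ |u⁻¹ * w * u|`.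
  obtain ⟨u, hu, huw⟩ :=
    exists_wordNorm_eq_of_le hS (w := w) (t := (wordNorm S w + 1) / 2) (by omega)
  have hconj := hw u⁻¹
  have h₁ := hδ.min_gromovProduct_le u w (w * u)
  have h₂ := hδ.min_gromovProduct_le u w w⁻¹
  simp only [gromovProduct] at h₁ h₂
  rw [inv_inv] at hconj
  rw [inv_mul_cancel_left, ← mul_assoc] at h₁
  rw [← mul_inv_rev, ← mul_inv_rev, wordNorm_inv, wordNorm_inv, wordNorm_inv] at h₂
  omega

theorem IsConjMinimal.wordNorm_pow_succ_ge (hw : IsConjMinimal S w)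
    (hlong : 8 * δ + 2 ≤ wordNorm S w) (k : ℕ) :
    wordNorm S (w ^ k) + wordNorm S w ≤ wordNorm S (w ^ (k + 1)) + 6 * δ := by
  have hsq := hw.two_mul_wordNorm_le hS hδ (by omega)
  induction k with
  | zero => simp
  | succ k ih =>
    have h := hδ.min_gromovProduct_le w⁻¹ (w ^ (k + 1))⁻¹ w
    simp only [gromovProduct] at h
    rw [show w⁻¹⁻¹ * (w ^ (k + 1))⁻¹ = (w ^ k)⁻¹ by group,
      show (w ^ (k + 1))⁻¹⁻¹ * w = w ^ (k + 1 + 1) by group, inv_inv,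
      wordNorm_inv, wordNorm_inv, wordNorm_inv] at h
    omega

theorem IsConjMinimal.le_wordNorm_pow (hw : IsConjMinimal S w)
    (hlong : 8 * δ + 2 ≤ wordNorm S w) (k : ℕ) : k ≤ wordNorm S (w ^ k) := by
  induction k with
  | zero => exact Nat.zero_le _
  | succ k ih =>
    have := hw.wordNorm_pow_succ_ge hS hδ hlong k
    omega

theorem IsConjMinimal.wordNorm_pow_add_ge (hw : IsConjMinimal S w)
    (hlong : 8 * δ + 2 ≤ wordNorm S w) (j k : ℕ) :
    wordNorm S (w ^ j) + wordNorm S (w ^ k) ≤ wordNorm S (w ^ (j + k)) + 8 * δ := by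
  cases k with
  | zero => simp
  | succ k =>
    have h := hδ.min_gromovProduct_le (w ^ j)⁻¹ (w ^ (k + 1)) w
    have hj := hw.wordNorm_pow_succ_ge hS hδ hlong j
    have hk := hw.wordNorm_pow_succ_ge hS hδ hlong k
    simp only [gromovProduct] at h
    rw [show (w ^ j)⁻¹⁻¹ * w ^ (k + 1) = w ^ (j + (k + 1)) by group,
      show (w ^ (k + 1))⁻¹ * w = (w ^ k)⁻¹ by group,
      show (w ^ j)⁻¹⁻¹ * w = w ^ (j + 1) by group, wordNorm_inv, wordNorm_inv] at h
    omega

theorem IsConjMinimal.quasiGeodesicPowers (hw : IsConjMinimal S w)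
    (hlong : 8 * δ + 2 ≤ wordNorm S w) : QuasiGeodesicPowers S (8 * δ) w :=
  ⟨hw.le_wordNorm_pow hS hδ hlong, hw.wordNorm_pow_add_ge hS hδ hlong⟩

end Hyperbolic

theorem Nat.exists_lt_le_add_of_lt {f : ℕ → ℕ} {a s : ℕ} (hf : ∀ k, f (k + 1) ≤ f k + s)
    (h₀ : f 0 ≤ a) {n : ℕ} (hn : a < f n) : ∃ k ≤ n, a < f k ∧ f k ≤ a + s := by
  induction n with
  | zero => omega
  | succ n ih =>
    by_cases h : a < f n
    · obtain ⟨k, hk, hak⟩ := ih h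
      exact ⟨k, hk.trans n.le_succ, hak⟩
    · exact ⟨n + 1, le_rfl, hn, by have := hf n; omega⟩

section Centralizer

variable {G : Type} [Group G] {S : Set G} {δ B : ℕ} (hδ : FourPointCondition S δ) {b g : G}
  (hb : QuasiGeodesicPowers S B b) (hgb : Commute g b)
  (hmin : ∀ j : ℤ, wordNorm S g ≤ wordNorm S (g * b ^ j))
include hδ hb hgb hmin

/-- As `g` commutes with `b`, `|g * (b ^ n)⁻¹|` is the distance from `g` to `b ^ n`, so
`halign` says that `g` lies close to a geodesic from `1` to `b ^ n`. -/
theorem wordNorm_pow_le_or_le_of_aligned {n k : ℕ} (hkn : k ≤ n)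
    (halign : wordNorm S (g * (b ^ n)⁻¹) + wordNorm S g ≤ wordNorm S (b ^ n) + B + 4 * δ) :
    wordNorm S (b ^ k) ≤ B + 2 * δ ∨ 2 * wordNorm S g ≤ wordNorm S (b ^ k) + B + 6 * δ := by
  obtain ⟨d, rfl⟩ := Nat.exists_eq_add_of_le hkn
  have h := hδ.min_gromovProduct_le g (b ^ (k + d)) (b ^ k)
  have hadd := hb.wordNorm_pow_add_ge k d
  have hmin' := hmin (-k)
  rw [zpow_neg, zpow_natCast] at hmin'
  simp only [gromovProduct] at h
  rw [show (b ^ (k + d))⁻¹ * b ^ k = (b ^ d)⁻¹ by group,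
    show g⁻¹ * b ^ k = (g * (b ^ k)⁻¹)⁻¹ by
      rw [mul_inv_rev, inv_inv, (hgb.pow_right k).inv_left.eq],
    show g⁻¹ * b ^ (k + d) = (g * (b ^ (k + d))⁻¹)⁻¹ by
      rw [mul_inv_rev, inv_inv, (hgb.pow_right (k + d)).inv_left.eq]] at h
  simp only [wordNorm_inv] at h
  omega

/-- The lengths `|b ^ k|` grow in steps of at most `|b|`; at the first `k` with
`|b ^ k| > B + 2δ` the dichotomy above forces `2 |g| ≤ |b ^ k| + B + 6δ`. -/
theorem wordNorm_le_of_aligned (hS : Subgroup.closure S = ⊤) {n : ℕ}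
    (halign : wordNorm S (g * (b ^ n)⁻¹) + wordNorm S g ≤ wordNorm S (b ^ n) + B + 4 * δ) :
    wordNorm S g ≤ B + 4 * δ + wordNorm S b := by
  by_contra! hlong
  have hmin' := hmin (-n)
  rw [zpow_neg, zpow_natCast] at hmin'
  obtain ⟨k, hkn, hk, hk'⟩ := Nat.exists_lt_le_add_of_lt (f := fun k => wordNorm S (b ^ k))
    (s := wordNorm S b) (fun k => pow_succ b k ▸ wordNorm_mul_le hS _ _) (by simp)
    (a := B + 2 * δ) (n := n) (by omega)
  rcases wordNorm_pow_le_or_le_of_aligned hδ hb hgb hmin hkn halign with h | h <;> omega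

theorem wordNorm_le_of_commute (hS : Subgroup.closure S = ⊤) :
    wordNorm S g ≤ B + 4 * δ + wordNorm S b := by
  -- With `n = |g|`, the four-point condition puts `g` close to a geodesic from `1` to `b ^ n`
  -- or to `b⁻¹ ^ n`.
  set n := wordNorm S g
  have hL := hb.le_wordNorm_pow n
  have h₁ := hδ.min_gromovProduct_le g (g * b ^ n) (b ^ n)
  have h₂ := hδ.min_gromovProduct_le (g * b ^ n) g (g * (b ^ n)⁻¹)
  have hadd := hb.wordNorm_pow_add_ge n n
  have hP := hmin n
  have hQ := hmin (-n)
  rw [zpow_natCast] at hP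
  rw [zpow_neg, zpow_natCast] at hQ
  have hc : g⁻¹ * b ^ n = b ^ n * g⁻¹ := (hgb.pow_right n).inv_left.eq
  simp only [gromovProduct] at h₁ h₂
  rw [inv_mul_cancel_left,
    show (g * b ^ n)⁻¹ * b ^ n = g⁻¹ by rw [mul_inv_rev, mul_assoc, hc, inv_mul_cancel_left],
    show g⁻¹ * b ^ n = (g * (b ^ n)⁻¹)⁻¹ by rw [mul_inv_rev, inv_inv, hc]] at h₁
  rw [inv_mul_cancel_left, show (g * b ^ n)⁻¹ * g = (b ^ n)⁻¹ by group,
    show (g * b ^ n)⁻¹ * (g * (b ^ n)⁻¹) = (b ^ (n + n))⁻¹ by group] at h₂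
  simp only [wordNorm_inv] at h₁ h₂
  rcases le_total (wordNorm S (g * (b ^ n)⁻¹)) (wordNorm S (g * b ^ n)) with hPQ | hPQ
  · exact wordNorm_le_of_aligned hδ hb hgb hmin hS (n := n) (by omega)
  · have := wordNorm_le_of_aligned hδ hb.inv hgb.inv_right
      (fun j => by simpa only [inv_zpow', neg_neg] using hmin (-j)) hS (n := n)
      (by simpa only [inv_pow, inv_inv, wordNorm_inv] using (by omega :
        wordNorm S (g * b ^ n) + wordNorm S g ≤ wordNorm S (b ^ n) + B + 4 * δ))
    rwa [wordNorm_inv] at this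

end Centralizer

section VirtuallyCyclic

variable {H : Type} [Group H]

theorem VirtuallyCyclic.exists_not_isOfFinOrder [Infinite H] (h : VirtuallyCyclic H) :
    ∃ x : H, ¬IsOfFinOrder x := by
  obtain ⟨K, hK, hcyc⟩ := h
  have : Infinite K := by
    by_contra hfin
    rw [not_infinite_iff_finite] at hfin
    have := (Subgroup.finite_iff_finite_and_finiteIndex K).2 ⟨hfin, hK⟩
    exact not_finite H
  obtain ⟨x, hx⟩ := IsCyclic.exists_ofOrder_eq_natCard (α := K)
  rw [Nat.card_eq_zero_of_infinite, orderOf_eq_zero_iff] at hx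
  exact ⟨x, Submonoid.isOfFinOrder_coe.not.2 hx⟩

theorem VirtuallyCyclic.exists_forall_pow_mem_zpowers (h : VirtuallyCyclic H) :
    ∃ (c : H) (n : ℕ), 0 < n ∧ ∀ x : H, x ^ n ∈ Subgroup.zpowers c := by
  obtain ⟨K, hK, hcyc⟩ := h
  obtain ⟨c, hc⟩ := IsCyclic.exists_generator (α := K)
  refine ⟨c, K.index.factorial, K.index.factorial_pos, fun x => ?_⟩
  have hx : x ^ K.index.factorial ∈ K :=
    K.pow_mem_of_index_ne_zero_of_dvd hK.index_ne_zero x fun m hm hle => Nat.dvd_factorial hm hle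
  obtain ⟨z, hz⟩ := Subgroup.mem_zpowers_iff.1 (hc ⟨_, hx⟩)
  exact Subgroup.mem_zpowers_iff.2 ⟨z, by simpa using congrArg Subtype.val hz⟩

end VirtuallyCyclic

section NormalVirtuallyCyclic

variable {G : Type} [Group G] {N : Subgroup G}

theorem VirtuallyCyclic.exists_mem_not_isOfFinOrder [Infinite N] (hvc : VirtuallyCyclic N) :
    ∃ u ∈ N, ¬IsOfFinOrder u := by
  obtain ⟨x, hx⟩ := hvc.exists_not_isOfFinOrder
  exact ⟨x, x.2, Submonoid.isOfFinOrder_coe.not.2 hx⟩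

theorem Subgroup.Normal.exists_conj_pow_eq_zpow (hN : N.Normal) (hvc : VirtuallyCyclic N)
    {u : G} (hu : u ∈ N) (hu' : ¬IsOfFinOrder u) :
    ∃ D : ℕ, 0 < D ∧ ∀ g : G, ∃ m : ℤ, g * u ^ D * g⁻¹ = u ^ m := by
  obtain ⟨c, n, hn, hpow⟩ := hvc.exists_forall_pow_mem_zpowers
  have hpow' : ∀ x ∈ N, ∃ z : ℤ, (c : G) ^ z = x ^ n := fun x hx => by
    obtain ⟨z, hz⟩ := Subgroup.mem_zpowers_iff.1 (hpow ⟨x, hx⟩)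
    exact ⟨z, by simpa using congrArg Subtype.val hz⟩
  obtain ⟨z, hz⟩ := hpow' u hu
  have hz0 : z ≠ 0 := by
    rintro rfl
    exact hu' (isOfFinOrder_iff_pow_eq_one.2 ⟨n, hn, by simpa using hz.symm⟩)
  obtain ⟨s, hs⟩ : z ∣ (z.natAbs : ℤ) := Int.dvd_natAbs.2 dvd_rfl
  refine ⟨n * z.natAbs, Nat.mul_pos hn (Int.natAbs_pos.2 hz0), fun g => ?_⟩
  obtain ⟨z', hz'⟩ := hpow' (g * u * g⁻¹) (hN.conj_mem u hu g)
  refine ⟨n * (z' * s), ?_⟩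
  calc g * u ^ (n * z.natAbs) * g⁻¹ = ((g * u * g⁻¹) ^ n) ^ z.natAbs := by
        rw [conj_pow, pow_mul, conj_pow]
    _ = (c : G) ^ (z * (z' * s)) := by
      rw [← hz', ← zpow_natCast, ← zpow_mul, hs, mul_left_comm]
    _ = u ^ (n * (z' * s)) := by rw [zpow_mul, hz, ← zpow_natCast, ← zpow_mul]

end NormalVirtuallyCyclic

section LongConjugates

variable {G : Type} [Group G] {S : Set G} (hSfin : S.Finite) (hS : Subgroup.closure S = ⊤)
include hSfin hS

theorem exists_forall_lt_wordNorm_conj_pow {u : G} (hu : ¬IsOfFinOrder u) {D : ℕ} (hD : 0 < D)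
    (hconj : ∀ g : G, ∃ m : ℤ, g * u ^ D * g⁻¹ = u ^ m) (R : ℕ) :
    ∃ n, ∀ q, R < wordNorm S (q * u ^ n * q⁻¹) := by
  -- A conjugate of `u ^ (D * (M + 1))` is a power `u ^ (m * (M + 1))` with `m ≠ 0`, while only
  -- finitely many powers of `u` are short.
  have hinj := injective_zpow_iff_not_isOfFinOrder.2 hu
  obtain ⟨M, hM⟩ :=
    (((finite_setOf_wordNorm_le hSfin hS R).preimage hinj.injOn).image Int.natAbs).bddAbove
  refine ⟨D * (M + 1), fun q => ?_⟩
  by_contra! hq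
  obtain ⟨m, hm⟩ := hconj q
  have hm0 : m ≠ 0 := by
    rintro rfl
    rw [zpow_zero, conj_eq_one_iff] at hm
    exact hu (isOfFinOrder_iff_pow_eq_one.2 ⟨D, hD, hm⟩)
  rw [pow_mul, ← conj_pow, hm, ← zpow_natCast, ← zpow_mul] at hq
  have := hM ⟨_, hq, rfl⟩
  rw [Int.natAbs_mul, Int.natAbs_natCast] at this
  nlinarith [Int.natAbs_pos.2 hm0]

theorem exists_quasiGeodesicPowers_conj_pow {δ : ℕ} (hδ : FourPointCondition S δ) {u : G}
    (hu : ¬IsOfFinOrder u) {D : ℕ} (hD : 0 < D)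
    (hconj : ∀ g : G, ∃ m : ℤ, g * u ^ D * g⁻¹ = u ^ m) :
    ∃ p n, QuasiGeodesicPowers S (8 * δ) (p * u ^ n * p⁻¹) := by
  obtain ⟨n, hlong⟩ := exists_forall_lt_wordNorm_conj_pow hSfin hS hu hD hconj (8 * δ + 1)
  obtain ⟨p, hp⟩ := exists_isConjMinimal_conj S (u ^ n)
  exact ⟨p, n, hp.quasiGeodesicPowers hS hδ (hlong p)⟩

end LongConjugates

section FiniteIndex

variable {G : Type} [Group G] {S : Set G} {δ B : ℕ} {b : G} {N : Subgroup G}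

theorem exists_inv_mul_mem_of_commute (hS : Subgroup.closure S = ⊤)
    (hδ : FourPointCondition S δ) (hb : QuasiGeodesicPowers S B b) (hbN : b ∈ N) {g : G}
    (hgb : Commute g b) :
    ∃ v, wordNorm S v ≤ B + 4 * δ + wordNorm S b ∧ v⁻¹ * g ∈ N := by
  set j := Function.argmin fun j : ℤ => wordNorm S (g * b ^ j)
  refine ⟨g * b ^ j, wordNorm_le_of_commute hδ hb (hgb.mul_left ((Commute.refl b).zpow_left j))
    (fun i => ?_) hS, ?_⟩
  · rw [mul_assoc, ← zpow_add]
    exact Function.argmin_le (fun j : ℤ => wordNorm S (g * b ^ j)) _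
  · rw [mul_inv_rev, inv_mul_cancel_right]
    exact N.inv_mem (N.zpow_mem hbN j)

theorem exists_forall_commute_or_commute
    (h : ∀ g : G, g * b * g⁻¹ = b ∨ g * b * g⁻¹ = b⁻¹) :
    ∃ h₀ : G, ∀ g, Commute g b ∨ Commute (h₀⁻¹ * g) b := by
  have hsemi (g : G) : Commute g b ∨ SemiconjBy g b b⁻¹ :=
    (h g).imp mul_inv_eq_iff_eq_mul.1 mul_inv_eq_iff_eq_mul.1
  by_cases hinv : ∃ h₀, SemiconjBy h₀ b b⁻¹
  · obtain ⟨h₀, hh₀⟩ := hinv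
    exact ⟨h₀, fun g => (hsemi g).imp_right hh₀.inv_symm_left.mul_left⟩
  · simp only [not_exists] at hinv
    exact ⟨1, fun g => .inl ((hsemi g).resolve_right (hinv g))⟩

theorem finiteIndex_of_forall_conj_eq_or_eq_inv (hSfin : S.Finite) (hS : Subgroup.closure S = ⊤)
    (hδ : FourPointCondition S δ) (hb : QuasiGeodesicPowers S B b) (hbN : b ∈ N)
    (hconj : ∀ g : G, g * b * g⁻¹ = b ∨ g * b * g⁻¹ = b⁻¹) : N.FiniteIndex := by
  obtain ⟨h₀, hh₀⟩ := exists_forall_commute_or_commute hconj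
  set F := {v | wordNorm S v ≤ B + 4 * δ + wordNorm S b}
  have hF : F.Finite := finite_setOf_wordNorm_le hSfin hS _
  have hcover : Set.SurjOn (fun v : G => (v : G ⧸ N)) (F ∪ (h₀ * ·) '' F) Set.univ := by
    intro y _
    obtain ⟨g, rfl⟩ := QuotientGroup.mk_surjective y
    rcases hh₀ g with hg | hg
    · obtain ⟨v, hv, hvg⟩ := exists_inv_mul_mem_of_commute hS hδ hb hbN hg
      exact ⟨v, .inl hv, QuotientGroup.eq.2 hvg⟩
    · obtain ⟨v, hv, hvg⟩ := exists_inv_mul_mem_of_commute hS hδ hb hbN hg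
      refine ⟨h₀ * v, .inr ⟨v, hv, rfl⟩, QuotientGroup.eq.2 ?_⟩
      simpa [mul_assoc] using hvg
  have := Set.finite_univ_iff.1 ((hF.union (hF.image _)).of_surjOn _ hcover)
  exact N.finiteIndex_of_finite_quotient

end FiniteIndex

/-- A virtually cyclic normal subgroup of a Gromov hyperbolic group is
either finite or of finite index. -/
theorem virtuallyCyclic_normal_subgroup_of_hyperbolic {G : Type} [Group G]
    (hG : IsHyperbolicGroup G) (N : Subgroup G) (hN : N.Normal)
    (hvc : VirtuallyCyclic ↥N) :
    Finite ↥N ∨ N.FiniteIndex := by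
  rcases finite_or_infinite N with hfin | hinf
  · exact .inl hfin
  obtain ⟨S, hS, δ, hδ⟩ := hG
  obtain ⟨u, huN, hu⟩ := hvc.exists_mem_not_isOfFinOrder
  obtain ⟨D, hD, hconj⟩ := hN.exists_conj_pow_eq_zpow hvc huN hu
  obtain ⟨p, n, hw⟩ := exists_quasiGeodesicPowers_conj_pow S.finite_toSet hS hδ hu hD hconj
  have hwN : p * u ^ n * p⁻¹ ∈ N := hN.conj_mem _ (N.pow_mem huN n) p
  obtain ⟨D', hD', hconj'⟩ := hN.exists_conj_pow_eq_zpow hvc hwN hw.not_isOfFinOrder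
  refine .inr (finiteIndex_of_forall_conj_eq_or_eq_inv S.finite_toSet hS hδ (hw.pow hD')
    (N.pow_mem hwN D') fun g => ?_)
  obtain ⟨m, hm⟩ := hconj' g
  exact hw.conj_pow_eq_or_eq_inv hS hm

end
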